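/- Let X₁, ..., X_d : Ω → ℝ and Y : Ω → ℝ be random variables with G, the distribution function of Y, continuous. For k ∈ {1,...,d}, define T(Y,(X₁,...,X_k)) := ( ∫_ℝ Var( P(Y ≥ y | X₁,...,X_k) ) dP^Y(y) ) / ( ∫_ℝ Var( 1_{Y ≥ y} ) dP^Y(y) ). Then T satisfies the information gain inequality: T(Y, X₁) ≤ T(Y,(X₁,X₂)) ≤ ... ≤ T(Y,(X₁,...,X_k)) ≤ ... ≤ T(Y,(X₁,...,X_d)). -/

import Mathlib

/-!
By the law of total variance, enlarging the conditioning σ-algebra can only increase the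
variance of a conditional expectation. Applied to `1_{Y ≥ y}` for every `y` and integrated
against the law of `Y`, this increases the numerator of `T` while its denominator stays fixed.
The integrand is measurable in `y` because it is `E[E[1_{Y ≥ y} | m]²] - P(Y ≥ y)²`, a difference
of two functions antitone in `y`.
-/

open MeasureTheory ProbabilityTheory Set

section VarianceCondExp

variable {Ω : Type*} {m m₁ m₂ m₀ : MeasurableSpace Ω} {μ : Measure Ω}

lemma variance_condExp_le [IsProbabilityMeasure μ] (hm : m ≤ m₀) {X : Ω → ℝ}
    (hX : MemLp X 2 μ) :
    Var[μ[X | m]; μ] ≤ Var[X; μ] := by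
  rw [← integral_condVar_add_variance_condExp hm hX]
  refine le_add_of_nonneg_left (integral_nonneg_of_ae ?_)
  exact condExp_nonneg (ae_of_all _ fun ω => sq_nonneg _)

lemma variance_condExp_mono [IsProbabilityMeasure μ] (h₁₂ : m₁ ≤ m₂) (h₂ : m₂ ≤ m₀) {X : Ω → ℝ}
    (hX : MemLp X 2 μ) :
    Var[μ[X | m₁]; μ] ≤ Var[μ[X | m₂]; μ] :=
  calc Var[μ[X | m₁]; μ] = Var[μ[μ[X | m₂] | m₁]; μ] :=
        variance_congr (condExp_condExp_of_le h₁₂ h₂).symm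
    _ ≤ Var[μ[X | m₂]; μ] := variance_condExp_le (h₁₂.trans h₂) (hX.condExp one_le_two)

variable {ι : Type*} {f : ι → Ω → ℝ}

lemma antitone_integral_sq_condExp [Preorder ι] [IsFiniteMeasure μ] (hf : Antitone f)
    (hf₀ : ∀ y, 0 ≤ᵐ[μ] f y) (hf₂ : ∀ y, MemLp (f y) 2 μ) :
    Antitone fun y => μ[μ[f y | m] ^ 2] := by
  intro y₁ y₂ hy
  have hle : μ[f y₂ | m] ≤ᵐ[μ] μ[f y₁ | m] :=
    condExp_mono ((hf₂ y₂).integrable one_le_two) ((hf₂ y₁).integrable one_le_two)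
      (ae_of_all _ (hf hy))
  refine integral_mono_ae ((hf₂ y₂).condExp one_le_two).integrable_sq
    ((hf₂ y₁).condExp one_le_two).integrable_sq ?_
  filter_upwards [hle, condExp_nonneg (m := m) (hf₀ y₂)] with ω hω h₀
  exact pow_le_pow_left₀ h₀ hω 2

lemma antitone_sq_integral [Preorder ι] (hf : Antitone f) (hf₀ : ∀ y, 0 ≤ᵐ[μ] f y)
    (hf₁ : ∀ y, Integrable (f y) μ) : Antitone fun y => μ[f y] ^ 2 := fun _ _ hy =>
  pow_le_pow_left₀ (integral_nonneg_of_ae (hf₀ _))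
    (integral_mono (hf₁ _) (hf₁ _) (hf hy)) 2

lemma measurable_variance_condExp [IsProbabilityMeasure μ] [LinearOrder ι] [TopologicalSpace ι]
    [OrderClosedTopology ι] [MeasurableSpace ι] [BorelSpace ι] (hm : m ≤ m₀) (hf : Antitone f)
    (hf₀ : ∀ y, 0 ≤ᵐ[μ] f y) (hf₂ : ∀ y, MemLp (f y) 2 μ) :
    Measurable fun y => Var[μ[f y | m]; μ] := by
  have hVar : (fun y => Var[μ[f y | m]; μ]) = fun y => μ[μ[f y | m] ^ 2] - μ[f y] ^ 2 := by
    ext y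
    rw [variance_eq_sub ((hf₂ y).condExp one_le_two), integral_condExp hm]
  rw [hVar]
  exact (antitone_integral_sq_condExp hf hf₀ hf₂).measurable.sub
    (antitone_sq_integral hf hf₀ fun y => (hf₂ y).integrable one_le_two).measurable

lemma integral_variance_condExp_mono [IsProbabilityMeasure μ] [LinearOrder ι] [TopologicalSpace ι]
    [OrderClosedTopology ι] [MeasurableSpace ι] [BorelSpace ι] (ν : Measure ι) [IsFiniteMeasure ν]
    (h₁₂ : m₁ ≤ m₂) (h₂ : m₂ ≤ m₀) (hf : Antitone f) (hf_meas : ∀ y, AEStronglyMeasurable (f y) μ)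
    (hf_mem : ∀ y, ∀ᵐ ω ∂μ, f y ω ∈ Icc 0 1) :
    ∫ y, Var[μ[f y | m₁]; μ] ∂ν ≤ ∫ y, Var[μ[f y | m₂]; μ] ∂ν := by
  have hf₀ : ∀ y, 0 ≤ᵐ[μ] f y := fun y => (hf_mem y).mono fun _ hω => hω.1
  have hf₂ : ∀ y, MemLp (f y) 2 μ := fun y =>
    MemLp.of_bound (hf_meas y) 1 <| (hf_mem y).mono fun _ hω => by
      rw [Real.norm_eq_abs, abs_of_nonneg hω.1]; exact hω.2
  have hbound : ∀ y, ‖Var[μ[f y | m₂]; μ]‖ ≤ ((1 - 0) / 2) ^ 2 := fun y => by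
    rw [Real.norm_of_nonneg (variance_nonneg _ _)]
    exact (variance_condExp_le h₂ (hf₂ y)).trans
      (variance_le_sq_of_bounded (hf_mem y) (hf_meas y).aemeasurable)
  refine integral_mono_of_nonneg (ae_of_all _ fun _ => variance_nonneg _ _)
    (Integrable.of_bound (measurable_variance_condExp h₂ hf hf₀ hf₂).aestronglyMeasurable _
      (ae_of_all _ hbound))
    (ae_of_all _ fun y => variance_condExp_mono h₁₂ h₂ (hf₂ y))

end VarianceCondExp

section UpperTail

variable {Ω α : Type*} [LinearOrder α] {Y : Ω → α}

lemma antitone_ite_le : Antitone fun y ω => if y ≤ Y ω then (1 : ℝ) else 0 := by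
  intro y₁ y₂ hy ω
  by_cases h₂ : y₂ ≤ Y ω
  · simp [h₂, hy.trans h₂]
  · simp only [h₂, if_false]
    split_ifs <;> norm_num

lemma ite_le_mem_Icc (y : α) (ω : Ω) : (if y ≤ Y ω then (1 : ℝ) else 0) ∈ Icc 0 1 := by
  split_ifs <;> simp

end UpperTail

section Filtration

variable {Ω β : Type*} [MeasurableSpace β] {d : ℕ}

lemma monotone_biSup_comap_lt (X : Fin d → Ω → β) :
    Monotone fun k : ℕ => ⨆ i ∈ Finset.univ.filter fun i : Fin d => (i : ℕ) < k,
      MeasurableSpace.comap (X i) ‹MeasurableSpace β› :=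
  fun _ _ hk => biSup_mono fun _ hi => by
    simp only [Finset.mem_filter, Finset.mem_univ, true_and] at hi ⊢
    omega

lemma biSup_comap_le {m₀ : MeasurableSpace Ω} {X : Fin d → Ω → β} (hX : ∀ i, Measurable (X i))
    (s : Finset (Fin d)) :
    ⨆ i ∈ s, MeasurableSpace.comap (X i) ‹MeasurableSpace β› ≤ m₀ :=
  iSup₂_le fun i _ => (hX i).comap_le

end Filtration

theorem T_information_gain_general
    {Ω : Type*} [MeasurableSpace Ω] (P : Measure Ω) [IsProbabilityMeasure P]
    {d : ℕ} (X : Fin d → Ω → ℝ) (Y : Ω → ℝ)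
    (hX : ∀ i, Measurable (X i)) (hY : Measurable Y)
    (T : ℕ → ℝ)
    (hT : ∀ k : ℕ, T k =
      (∫ y, variance
          (P[fun ω => if y ≤ Y ω then (1:ℝ) else 0 |
            ⨆ i ∈ Finset.univ.filter fun i : Fin d => (i : ℕ) < k,
              MeasurableSpace.comap (X i) inferInstance]) P ∂(P.map Y)) /
      (∫ y, variance (fun ω => if y ≤ Y ω then (1:ℝ) else 0) P ∂(P.map Y))) :
    ∀ k : ℕ, 1 ≤ k → k < d → T k ≤ T (k + 1) := by
  intro k _ _
  have hmeas (y : ℝ) : Measurable fun ω => if y ≤ Y ω then (1 : ℝ) else 0 :=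
    Measurable.ite (hY measurableSet_Ici) measurable_const measurable_const
  have := Measure.isProbabilityMeasure_map (μ := P) hY.aemeasurable
  rw [hT k, hT (k + 1)]
  exact div_le_div_of_nonneg_right
    (integral_variance_condExp_mono _ (monotone_biSup_comap_lt X k.le_succ) (biSup_comap_le hX _)
      antitone_ite_le (fun y => (hmeas y).aestronglyMeasurable)
      fun y => ae_of_all _ (ite_le_mem_Icc y))
    (integral_nonneg fun _ => variance_nonneg _ _)

/-- Azadkia–Chatterjee's `T` satisfies the information gain inequality:
`T(Y, X₁) ≤ T(Y,(X₁,X₂)) ≤ … ≤ T(Y,(X₁,…,X_d))`, where `T k` denotes `T` computed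
conditionally on the first `k` variables. -/
theorem T_information_gain
    {Ω : Type*} [MeasurableSpace Ω] (P : Measure Ω) [IsProbabilityMeasure P]
    {d : ℕ} (hd : 1 ≤ d) (X : Fin d → Ω → ℝ) (Y : Ω → ℝ)
    (hX : ∀ i, Measurable (X i)) (hY : Measurable Y)
    (G : ℝ → ℝ) (hG : ∀ y, G y = (P {ω | Y ω ≤ y}).toReal) (hGc : Continuous G)
    (T : ℕ → ℝ)
    (hT : ∀ k : ℕ, T k =
      (∫ y, variance
          (P[fun ω => if y ≤ Y ω then (1:ℝ) else 0 |
            ⨆ i ∈ Finset.univ.filter fun i : Fin d => (i : ℕ) < k,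
              MeasurableSpace.comap (X i) inferInstance]) P ∂(P.map Y)) /
      (∫ y, variance (fun ω => if y ≤ Y ω then (1:ℝ) else 0) P ∂(P.map Y))) :
    ∀ k : ℕ, 1 ≤ k → k < d → T k ≤ T (k + 1) :=
  T_information_gain_general P X Y hX hY T hT
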